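/- Fix α < 0 and κ > 0, and let n₁ < n₂ be nonnegative integers with l(n₁, α) and l(n₂, α) both well-defined (where l(n, α) = θₙ coth(θₙ), θₙ = √(α + n²κ²) interpreted via cot for imaginary argument). Then the function β ↦ l(n₂, β) − l(n₁, β) is real-analytic and nonconstant on a neighborhood of α; in particular its zeros near α are isolated. -/

import Mathlib

open Real Filter Topology
open scoped Nat

/-- `l(n, β) = θₙ coth θₙ` as a function of the vorticity parameter `β`, with
`θₙ = √(β + n²κ²)`, interpreted via `cot` for imaginary `θₙ` and by `1` at `θₙ = 0`. -/
noncomputable def lfun (κ : ℝ) (n : ℕ) (β : ℝ) : ℝ :=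
  let t : ℝ := β + (n : ℝ) ^ 2 * κ ^ 2
  if 0 < t then Real.sqrt t * Real.cosh (Real.sqrt t) / Real.sinh (Real.sqrt t)
  else if t < 0 then Real.sqrt (-t) * Real.cos (Real.sqrt (-t)) / Real.sin (Real.sqrt (-t))
  else 1

/-!
Put `t = β + n²κ²`. Then `l(n, β) = C(t) / S(t)` for the entire functions
`C(t) = ∑ tᵏ / (2k)! = cosh √t` and `S(t) = ∑ tᵏ / (2k+1)! = sinh √t / √t`, so the difference is
analytic wherever both denominators are nonzero, and its zeros are isolated once it is nonconstant.

For `t ≠ 0`, `L(t) = √t coth √t` solves the Riccati equation `2t L' = L + t - L²`. If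
`L(β + a₂) - L(β + a₁) = c` on an open set with `a₁ ≠ a₂`, subtracting the two Riccati equations
shows that `β ↦ L(β + a₁)` also solves a linear equation `L' = A - kL`. Differentiating the Riccati
equation along it gives, for `p = L'`, successively `p (1 - 2k(β + a₁) + 2L) = 1`,
`2p² - 2kp - k = 0` and `kp(2p - k) = 0`; so `k ≠ 0` and `p = k/2` is constant, whereas `p' = -kp`.
-/

noncomputable def sqrtCoth (t : ℝ) : ℝ :=
  if 0 < t then √t * cosh √t / sinh √t
  else if t < 0 then √(-t) * cos √(-t) / sin √(-t)
  else 1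

theorem lfun_eq_sqrtCoth (κ : ℝ) (n : ℕ) :
    lfun κ n = fun β => sqrtCoth (β + (n : ℝ) ^ 2 * κ ^ 2) := rfl

theorem sqrtCoth_of_pos {t : ℝ} (ht : 0 < t) : sqrtCoth t = √t * cosh √t / sinh √t :=
  if_pos ht

theorem sqrtCoth_of_neg {t : ℝ} (ht : t < 0) : sqrtCoth t = √(-t) * cos √(-t) / sin √(-t) := by
  rw [sqrtCoth, if_neg ht.not_gt, if_pos ht]

noncomputable def coshSqrt (t : ℝ) : ℝ := ∑' k : ℕ, t ^ k / ((2 * k)! : ℝ)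

noncomputable def sinhcSqrt (t : ℝ) : ℝ := ∑' k : ℕ, t ^ k / ((2 * k + 1)! : ℝ)

theorem coshSqrt_of_nonneg {t : ℝ} (ht : 0 ≤ t) : coshSqrt t = cosh √t := by
  refine HasSum.tsum_eq ?_
  simpa [pow_mul, sq_sqrt ht] using hasSum_cosh √t

theorem coshSqrt_of_nonpos {t : ℝ} (ht : t ≤ 0) : coshSqrt t = cos √(-t) := by
  refine HasSum.tsum_eq ?_
  simpa [pow_mul, sq_sqrt (neg_nonneg.2 ht), ← mul_pow] using hasSum_cos √(-t)

theorem sinhcSqrt_of_pos {t : ℝ} (ht : 0 < t) : sinhcSqrt t = sinh √t / √t := by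
  refine HasSum.tsum_eq ?_
  have hs : √t ≠ 0 := (sqrt_pos.2 ht).ne'
  refine ((hasSum_sinh √t).div_const √t).congr_fun fun k => ?_
  rw [pow_succ, pow_mul, sq_sqrt ht.le]
  field_simp

theorem sinhcSqrt_of_neg {t : ℝ} (ht : t < 0) : sinhcSqrt t = sin √(-t) / √(-t) := by
  refine HasSum.tsum_eq ?_
  have hs : √(-t) ≠ 0 := (sqrt_pos.2 (neg_pos.2 ht)).ne'
  refine ((hasSum_sin √(-t)).div_const √(-t)).congr_fun fun k => ?_
  rw [pow_succ, pow_mul, sq_sqrt (neg_nonneg.2 ht.le)]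
  field_simp
  rw [← mul_pow, neg_one_mul, neg_neg]

theorem sinhcSqrt_zero : sinhcSqrt 0 = 1 := by
  rw [sinhcSqrt, tsum_eq_single 0 fun k hk => by simp [zero_pow hk]]
  simp

theorem sinhcSqrt_ne_zero_iff {t : ℝ} : sinhcSqrt t ≠ 0 ↔ (t < 0 → sin √(-t) ≠ 0) := by
  rcases lt_trichotomy t 0 with ht | rfl | ht
  · have hs : √(-t) ≠ 0 := (sqrt_pos.2 (neg_pos.2 ht)).ne'
    simp [sinhcSqrt_of_neg ht, ht, hs]
  · simp [sinhcSqrt_zero]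
  · have hs : 0 < √t := sqrt_pos.2 ht
    simp [sinhcSqrt_of_pos ht, ht.not_gt, (sinh_pos_iff.2 hs).ne', hs.ne']

-- At the poles (`sin √(-t) = 0`) both sides are `0` by the convention `x / 0 = 0`.
theorem sqrtCoth_eq_div (t : ℝ) : sqrtCoth t = coshSqrt t / sinhcSqrt t := by
  rcases lt_trichotomy t 0 with ht | rfl | ht
  · rw [sqrtCoth_of_neg ht, coshSqrt_of_nonpos ht.le, sinhcSqrt_of_neg ht, div_div_eq_mul_div,
      mul_comm]
  · simp [sqrtCoth, coshSqrt_of_nonneg le_rfl, sinhcSqrt_zero]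
  · rw [sqrtCoth_of_pos ht, coshSqrt_of_nonneg ht.le, sinhcSqrt_of_pos ht, div_div_eq_mul_div,
      mul_comm]

theorem Nat.succ_mul_factorial_le_of_strictMono {m : ℕ → ℕ} (hm : StrictMono m) (n : ℕ) :
    (n + 1) * (m n)! ≤ (m (n + 1))! :=
  calc (n + 1) * (m n)! ≤ (m n + 1) * (m n)! :=
        Nat.mul_le_mul_right _ (by simpa using hm.id_le n)
    _ = (m n + 1)! := (Nat.factorial_succ _).symm
    _ ≤ (m (n + 1))! := Nat.factorial_le (hm n.lt_succ_self)

theorem analyticAt_tsum_pow_div_factorial {m : ℕ → ℕ} (hm : StrictMono m) (x : ℝ) :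
    AnalyticAt ℝ (fun t : ℝ => ∑' k, t ^ k / ((m k)! : ℝ)) x := by
  set c : ℕ → ℝ := fun k => ((m k)! : ℝ)⁻¹
  have hratio : Tendsto (fun n => ‖c n.succ‖ / ‖c n‖) atTop (𝓝 0) := by
    refine squeeze_zero (fun n => by positivity) (fun n => ?_)
      tendsto_one_div_add_atTop_nhds_zero_nat
    have h := Nat.succ_mul_factorial_le_of_strictMono hm n
    have h' : ((n : ℝ) + 1) * (m n)! ≤ (m (n + 1))! := by exact_mod_cast h
    simp only [c, norm_inv, Real.norm_natCast, inv_div_inv]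
    rw [div_le_div_iff₀ (by positivity) (by positivity)]
    linarith
  have hr := FormalMultilinearSeries.ofScalars_radius_eq_top_of_tendsto ℝ c
    (Eventually.of_forall fun k => by positivity) hratio
  have hsum : (fun t : ℝ => ∑' k, t ^ k / ((m k)! : ℝ)) =
      (FormalMultilinearSeries.ofScalars ℝ c).sum := by
    funext t
    rw [← FormalMultilinearSeries.ofScalarsSum, FormalMultilinearSeries.ofScalars_sum_eq]
    simp [c, div_eq_inv_mul]
  rw [hsum]
  exact ((FormalMultilinearSeries.ofScalars ℝ c).hasFPowerSeriesOnBall (by simp [hr]))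
    |>.analyticAt_of_mem (by simp [hr])

-- `σ = 1` covers `(c, s) = (cosh, sinh)` and `σ = -1` covers `(cos, sin)`.
theorem hasDerivAt_sqrt_mul_div_riccati {σ : ℝ} (hσ : σ * σ = 1) {c s : ℝ → ℝ}
    (hc : ∀ x, HasDerivAt c (σ * s x) x) (hs : ∀ x, HasDerivAt s (c x) x) {t : ℝ}
    (ht : 0 < σ * t) (hst : s √(σ * t) ≠ 0) :
    ∃ y, HasDerivAt (fun u => √(σ * u) * c √(σ * u) / s √(σ * u)) y t ∧
      2 * t * y = √(σ * t) * c √(σ * t) / s √(σ * t) + t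
        - (√(σ * t) * c √(σ * t) / s √(σ * t)) ^ 2 := by
  set x := √(σ * t) with hxdef
  have hx : 0 < x := sqrt_pos.2 ht
  have hxx : x ^ 2 = σ * t := sq_sqrt ht.le
  have hsqrt : HasDerivAt (fun u => √(σ * u)) (1 / (2 * x) * (σ * 1)) t :=
    (hasDerivAt_sqrt ht.ne').comp t ((hasDerivAt_id t).const_mul σ)
  refine ⟨_, (hsqrt.mul ((hc x).comp t hsqrt)).div ((hs x).comp t hsqrt) hst, ?_⟩
  have htx : t = σ * x ^ 2 := by rw [hxx, ← mul_assoc, hσ, one_mul]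
  simp only [Function.comp_apply, Pi.mul_apply, ← hxdef]
  clear_value x
  subst htx
  field_simp
  linear_combination (s x * c x - c x ^ 2 * x + σ * s x ^ 2 * x) * hσ

theorem HasDerivAt.eq_zero_of_eqOn_zero {f : ℝ → ℝ} {f' β : ℝ} {U : Set ℝ}
    (h : HasDerivAt f f' β) (hU : IsOpen U) (hβ : β ∈ U) (hf : Set.EqOn f 0 U) : f' = 0 :=
  h.unique <| (hasDerivAt_const β 0).congr_of_eventuallyEq <|
    Filter.eventuallyEq_of_mem (hU.mem_nhds hβ) hf

theorem false_of_riccati_of_linear {L : ℝ → ℝ} {U : Set ℝ} (hU : IsOpen U) (hne : U.Nonempty)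
    {a A k : ℝ} (hL : ∀ β ∈ U, HasDerivAt L (A - k * L β) β)
    (hric : ∀ β ∈ U, 2 * (β + a) * (A - k * L β) = L β + (β + a) - L β ^ 2) : False := by
  set p : ℝ → ℝ := fun β => A - k * L β
  have hp : ∀ β ∈ U, HasDerivAt p (-k * p β) β := fun β hβ => by
    simpa [p] using ((hL β hβ).const_mul k).const_sub A
  have ht : ∀ β, HasDerivAt (fun b : ℝ => b + a) 1 β := fun β => (hasDerivAt_id β).add_const a
  have h₁ : ∀ β ∈ U, p β * (1 - 2 * k * (β + a) + 2 * L β) = 1 := fun β hβ => by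
    have := ((((ht β).const_mul 2).mul (hp β hβ)).sub
      (((hL β hβ).add (ht β)).sub ((hL β hβ).pow 2))).eq_zero_of_eqOn_zero hU hβ
      fun b hb => by simp [p, hric b hb]
    simp only [p] at this ⊢
    linear_combination this
  have h₂ : ∀ β ∈ U, 2 * p β ^ 2 - 2 * k * p β - k = 0 := fun β hβ => by
    have := (((hp β hβ).mul ((((ht β).const_mul (2 * k)).const_sub 1).add
      ((hL β hβ).const_mul 2))).sub_const 1).eq_zero_of_eqOn_zero hU hβ
      fun b hb => by simp [h₁ b hb]
    simp only [p, Pi.add_apply] at this h₁ ⊢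
    linear_combination this + k * h₁ β hβ
  have h₃ : ∀ β ∈ U, k * p β * (2 * p β - k) = 0 := fun β hβ => by
    have := (((((hp β hβ).pow 2).const_mul 2).sub ((hp β hβ).const_mul (2 * k))).sub_const k
      ).eq_zero_of_eqOn_zero hU hβ h₂
    linear_combination -this / 2
  obtain ⟨β₀, hβ₀⟩ := hne
  have hp₀ : ∀ β ∈ U, p β ≠ 0 := fun β hβ => left_ne_zero_of_mul_eq_one (h₁ β hβ)
  by_cases hk : k = 0
  · have := h₂ β₀ hβ₀
    simp only [hk, sub_zero] at this
    exact hp₀ β₀ hβ₀ (by simpa using this)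
  · have hpk : ∀ β ∈ U, p β = k / 2 := fun β hβ => by
      have := (mul_eq_zero.1 (h₃ β hβ)).resolve_left (mul_ne_zero hk (hp₀ β hβ))
      linear_combination this / 2
    have := ((hp β₀ hβ₀).sub_const (k / 2)).eq_zero_of_eqOn_zero hU hβ₀
      fun b hb => by simp [hpk b hb]
    rw [hpk β₀ hβ₀] at this
    exact hk (by nlinarith)

theorem analyticAt_coshSqrt (t : ℝ) : AnalyticAt ℝ coshSqrt t :=
  analyticAt_tsum_pow_div_factorial (fun _ _ h => by omega) t

theorem analyticAt_sinhcSqrt (t : ℝ) : AnalyticAt ℝ sinhcSqrt t :=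
  analyticAt_tsum_pow_div_factorial (fun _ _ h => by omega) t

theorem analyticAt_sqrtCoth {t : ℝ} (ht : sinhcSqrt t ≠ 0) : AnalyticAt ℝ sqrtCoth t := by
  rw [show sqrtCoth = fun t => coshSqrt t / sinhcSqrt t from funext sqrtCoth_eq_div]
  exact (analyticAt_coshSqrt t).div (analyticAt_sinhcSqrt t) ht

theorem sqrtCoth_riccati {t : ℝ} (ht : t ≠ 0) (hS : sinhcSqrt t ≠ 0) :
    ∃ y, HasDerivAt sqrtCoth y t ∧ 2 * t * y = sqrtCoth t + t - sqrtCoth t ^ 2 := by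
  rcases ht.lt_or_gt with ht | ht
  · obtain ⟨y, hy, hric⟩ := hasDerivAt_sqrt_mul_div_riccati (σ := -1) (by norm_num)
      (fun x => by simpa using hasDerivAt_cos x) hasDerivAt_sin (by linarith)
      (by simpa using sinhcSqrt_ne_zero_iff.1 hS ht)
    simp only [neg_one_mul] at hy hric
    refine ⟨y, hy.congr_of_eventuallyEq ?_, by rwa [sqrtCoth_of_neg ht]⟩
    filter_upwards [gt_mem_nhds ht] with u hu using sqrtCoth_of_neg hu
  · have hsinh : sinh √t ≠ 0 := (sinh_pos_iff.2 (sqrt_pos.2 ht)).ne'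
    obtain ⟨y, hy, hric⟩ := hasDerivAt_sqrt_mul_div_riccati (σ := 1) (by norm_num)
      (fun x => by simpa using hasDerivAt_cosh x) hasDerivAt_sinh (by linarith)
      (by simpa using hsinh)
    simp only [one_mul] at hy hric
    refine ⟨y, hy.congr_of_eventuallyEq ?_, by rwa [sqrtCoth_of_pos ht]⟩
    filter_upwards [lt_mem_nhds ht] with u hu using sqrtCoth_of_pos hu

theorem exists_sqrtCoth_add_sub_ne {a₁ a₂ : ℝ} (ha : a₁ ≠ a₂) {U : Set ℝ} (hU : IsOpen U)
    (hne : U.Nonempty) (hreg : ∀ β ∈ U, sinhcSqrt (β + a₁) ≠ 0 ∧ sinhcSqrt (β + a₂) ≠ 0)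
    (c : ℝ) : ∃ β ∈ U, sqrtCoth (β + a₂) - sqrtCoth (β + a₁) ≠ c := by
  by_contra! hconst
  obtain ⟨β₀, hβ₀⟩ := hne
  set U' := U \ {-a₁, -a₂}
  have hU' : IsOpen U' := hU.sdiff (Set.toFinite _).isClosed
  have hne' : U'.Nonempty :=
    ((infinite_of_mem_nhds β₀ (hU.mem_nhds hβ₀)).sdiff (Set.toFinite _)).nonempty
  set L : ℝ → ℝ := fun β => sqrtCoth (β + a₁)
  have hd : a₂ - a₁ ≠ 0 := sub_ne_zero.2 ha.symm
  set A := (c + (a₂ - a₁) - c ^ 2) / (2 * (a₂ - a₁))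
  set k := c / (a₂ - a₁)
  have hlin : ∀ β ∈ U', HasDerivAt L (A - k * L β) β ∧
      2 * (β + a₁) * (A - k * L β) = L β + (β + a₁) - L β ^ 2 := by
    rintro β ⟨hβU, hβ⟩
    simp only [Set.mem_insert_iff, Set.mem_singleton_iff, not_or] at hβ
    obtain ⟨y₁, h₁, r₁⟩ :=
      sqrtCoth_riccati (t := β + a₁) (fun h => hβ.1 (by linarith)) (hreg β hβU).1
    obtain ⟨y₂, h₂, r₂⟩ :=
      sqrtCoth_riccati (t := β + a₂) (fun h => hβ.2 (by linarith)) (hreg β hβU).2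
    have h₁' : HasDerivAt L y₁ β := h₁.comp_add_const β a₁
    have hshift : ∀ b ∈ U, sqrtCoth (b + a₂) = L b + c := fun b hb => by
      linear_combination hconst b hb
    have hy : y₂ = y₁ := ((h₂.comp_add_const β a₂).congr_of_eventuallyEq
      (eventuallyEq_of_mem (hU.mem_nhds hβU) fun b hb => (hshift b hb).symm)).unique
      (h₁'.add_const c)
    rw [hy, hshift β hβU] at r₂
    have hlin : y₁ = A - k * L β := by
      simp only [A, k]
      field_simp
      linear_combination r₂ - r₁
    exact hlin ▸ ⟨h₁', r₁⟩
  exact false_of_riccati_of_linear hU' hne' (fun β hβ => (hlin β hβ).1)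
    (fun β hβ => (hlin β hβ).2)

theorem analyticAt_lfun {κ : ℝ} {n : ℕ} {β : ℝ} (h : sinhcSqrt (β + (n : ℝ) ^ 2 * κ ^ 2) ≠ 0) :
    AnalyticAt ℝ (lfun κ n) β := by
  rw [lfun_eq_sqrtCoth]
  exact (analyticAt_sqrtCoth h).comp (f := fun b => b + _) (analyticAt_id.add analyticAt_const)

theorem eventually_sinhcSqrt_add_ne_zero {a α : ℝ} (h : sinhcSqrt (α + a) ≠ 0) :
    ∀ᶠ β in 𝓝 α, sinhcSqrt (β + a) ≠ 0 :=
  ((analyticAt_sinhcSqrt _).continuousAt.comp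
    (continuousAt_id.add continuousAt_const)).eventually_ne h

theorem stmt_9_general (κ α : ℝ) (hκ : 0 < κ) (n₁ n₂ : ℕ) (hn : n₁ < n₂)
    (hwd : ∀ n ∈ ({n₁, n₂} : Set ℕ), α + (n : ℝ) ^ 2 * κ ^ 2 < 0 →
      Real.sin (Real.sqrt (-(α + (n : ℝ) ^ 2 * κ ^ 2))) ≠ 0) :
    ∃ ε > 0,
      AnalyticOnNhd ℝ (fun β => lfun κ n₂ β - lfun κ n₁ β) (Metric.ball α ε) ∧
      (∃ β ∈ Metric.ball α ε, lfun κ n₂ β - lfun κ n₁ β ≠ lfun κ n₂ α - lfun κ n₁ α) ∧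
      ∀ β₀ ∈ Metric.ball α ε, lfun κ n₂ β₀ - lfun κ n₁ β₀ = 0 →
        ∃ δ > 0, ∀ β : ℝ, β ≠ β₀ → |β - β₀| < δ → lfun κ n₂ β - lfun κ n₁ β ≠ 0 := by
  have hreg : ∀ n ∈ ({n₁, n₂} : Set ℕ), ∀ᶠ β in 𝓝 α, sinhcSqrt (β + (n : ℝ) ^ 2 * κ ^ 2) ≠ 0 :=
    fun n hn => eventually_sinhcSqrt_add_ne_zero (sinhcSqrt_ne_zero_iff.2 (hwd n hn))
  obtain ⟨ε, hε, hball⟩ :=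
    Metric.eventually_nhds_iff_ball.1 ((hreg n₁ (by simp)).and (hreg n₂ (by simp)))
  have hana : AnalyticOnNhd ℝ (fun β => lfun κ n₂ β - lfun κ n₁ β) (Metric.ball α ε) :=
    fun β hβ => (analyticAt_lfun (hball β hβ).2).sub (analyticAt_lfun (hball β hβ).1)
  have hshift : (n₁ : ℝ) ^ 2 * κ ^ 2 ≠ (n₂ : ℝ) ^ 2 * κ ^ 2 :=
    (mul_lt_mul_of_pos_right (pow_lt_pow_left₀ (by exact_mod_cast hn) (Nat.cast_nonneg _)
      two_ne_zero) (by positivity)).ne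
  have hnc : ∃ β ∈ Metric.ball α ε, lfun κ n₂ β - lfun κ n₁ β ≠ lfun κ n₂ α - lfun κ n₁ α :=
    exists_sqrtCoth_add_sub_ne hshift Metric.isOpen_ball (Metric.nonempty_ball.2 hε) hball _
  refine ⟨ε, hε, hana, hnc, fun β₀ hβ₀ _ => ?_⟩
  obtain ⟨β₁, hβ₁, hne⟩ := hnc
  have hzeros := (hana β₀ hβ₀).eventually_eq_zero_or_eventually_ne_zero.resolve_left
    fun h => hne <| by
      have := hana.eqOn_zero_of_preconnected_of_eventuallyEq_zero
        (convex_ball α ε).isPreconnected hβ₀ h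
      simpa using (this hβ₁).trans (this (Metric.mem_ball_self hε)).symm
  obtain ⟨δ, hδ, hd⟩ := Metric.eventually_nhds_iff.1 (eventually_nhdsWithin_iff.1 hzeros)
  exact ⟨δ, hδ, fun β hββ₀ hlt => hd (by rwa [Real.dist_eq]) hββ₀⟩

/-- For `n₁ < n₂` with `l(n₁, ·)`, `l(n₂, ·)` well-defined at `α`, the difference
`β ↦ l(n₂, β) − l(n₁, β)` is real-analytic and nonconstant near `α`; in particular its
zeros near `α` are isolated. -/
theorem stmt_9 (κ α : ℝ) (hκ : 0 < κ) (hα : α < 0) (n₁ n₂ : ℕ) (hn : n₁ < n₂)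
    (hwd : ∀ n ∈ ({n₁, n₂} : Set ℕ), α + (n : ℝ) ^ 2 * κ ^ 2 < 0 →
      Real.sin (Real.sqrt (-(α + (n : ℝ) ^ 2 * κ ^ 2))) ≠ 0) :
    ∃ ε > 0,
      AnalyticOnNhd ℝ (fun β => lfun κ n₂ β - lfun κ n₁ β) (Metric.ball α ε) ∧
      (∃ β ∈ Metric.ball α ε, lfun κ n₂ β - lfun κ n₁ β ≠ lfun κ n₂ α - lfun κ n₁ α) ∧
      ∀ β₀ ∈ Metric.ball α ε, lfun κ n₂ β₀ - lfun κ n₁ β₀ = 0 →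
        ∃ δ > 0, ∀ β : ℝ, β ≠ β₀ → |β - β₀| < δ → lfun κ n₂ β - lfun κ n₁ β ≠ 0 :=
  stmt_9_general κ α hκ n₁ n₂ hn hwd
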